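/- For the bimolecular conservation structure A = [[1,0,1],[0,1,1]], if X₁, X₂, X₃ are independent Poisson with rates λ₁, λ₂, λ₃ and Y₁ = X₁+X₃, Y₂ = X₂+X₃, then for b₁, b₂ ≥ 1 with P(Y=b)>0: E[X₃ | Y₁=b₁, Y₂=b₂] = λ₃ · F₀(b₁-1, b₂-1)/F₀(b₁,b₂), where F₀(b₁,b₂) = Σ_{k=0}^{min(b₁,b₂)} λ₃ᵏ λ₁^{b₁-k} λ₂^{b₂-k}/(k!(b₁-k)!(b₂-k)!). -/

import Mathlib

/-!
On the event `{Y₁ = b₁, Y₂ = b₂}` the value `k` of `X₃` determines `X₁ = b₁ - k` and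
`X₂ = b₂ - k`, so by independence the event splits into the atoms
`{X₁ = b₁ - k, X₂ = b₂ - k, X₃ = k}`, `k ≤ min b₁ b₂`, of probability
`e^{-(λ₁+λ₂+λ₃)} tₖ(b₁, b₂)`, where `tₖ(b₁, b₂)` is the `k`-th summand of `F₀(b₁, b₂)`.
The conditional mean of `X₃` is therefore `Σ k tₖ / Σ tₖ`, and
`k tₖ(b₁, b₂) = λ₃ tₖ₋₁(b₁ - 1, b₂ - 1)` turns the numerator into `λ₃ F₀(b₁ - 1, b₂ - 1)`.
-/

open MeasureTheory ProbabilityTheory Real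
open scoped BigOperators

/-- For `A = [[1,0,1],[0,1,1]]`, the single-sum form
`F₀(b₁,b₂) = Σ_{k=0}^{min(b₁,b₂)} λ₃ᵏ λ₁^{b₁-k} λ₂^{b₂-k}/(k!(b₁-k)!(b₂-k)!)`. -/
noncomputable def F0bimol (lam1 lam2 lam3 : ℝ) (b₁ b₂ : ℕ) : ℝ :=
  ∑ k ∈ Finset.range (min b₁ b₂ + 1),
    lam3 ^ k * lam1 ^ (b₁ - k) * lam2 ^ (b₂ - k) /
      (Nat.factorial k * Nat.factorial (b₁ - k) * Nat.factorial (b₂ - k))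

section F0bimol

open Finset Nat

variable (lam1 lam2 lam3 : ℝ)

noncomputable def F0bimolTerm (b₁ b₂ k : ℕ) : ℝ :=
  lam3 ^ k * lam1 ^ (b₁ - k) * lam2 ^ (b₂ - k) / (k ! * (b₁ - k)! * (b₂ - k)!)

theorem F0bimol_eq_sum (b₁ b₂ : ℕ) :
    F0bimol lam1 lam2 lam3 b₁ b₂ =
      ∑ k ∈ range (min b₁ b₂ + 1), F0bimolTerm lam1 lam2 lam3 b₁ b₂ k :=
  rfl

theorem succ_mul_F0bimolTerm_succ (b₁ b₂ k : ℕ) :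
    ((k + 1 : ℕ) : ℝ) * F0bimolTerm lam1 lam2 lam3 (b₁ + 1) (b₂ + 1) (k + 1) =
      lam3 * F0bimolTerm lam1 lam2 lam3 b₁ b₂ k := by
  simp only [F0bimolTerm, Nat.add_sub_add_right, factorial_succ, cast_mul]
  field_simp
  ring

theorem sum_mul_F0bimolTerm_succ (b₁ b₂ : ℕ) :
    ∑ k ∈ range (min (b₁ + 1) (b₂ + 1) + 1),
        (k : ℝ) * F0bimolTerm lam1 lam2 lam3 (b₁ + 1) (b₂ + 1) k =
      lam3 * F0bimol lam1 lam2 lam3 b₁ b₂ := by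
  rw [Nat.add_min_add_right, sum_range_succ', F0bimol_eq_sum, mul_sum]
  simp only [succ_mul_F0bimolTerm_succ, Nat.cast_zero, zero_mul, add_zero]

end F0bimol

theorem ProbabilityTheory.iIndepFun.measure_inter_preimage_three {Ω β : Type*}
    [MeasurableSpace Ω] [MeasurableSpace β] {μ : Measure Ω} {X1 X2 X3 : Ω → β}
    (h : iIndepFun ![X1, X2, X3] μ) {s1 s2 s3 : Set β} (hs1 : MeasurableSet s1)
    (hs2 : MeasurableSet s2) (hs3 : MeasurableSet s3) :
    μ (X1 ⁻¹' s1 ∩ X2 ⁻¹' s2 ∩ X3 ⁻¹' s3) =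
      μ (X1 ⁻¹' s1) * μ (X2 ⁻¹' s2) * μ (X3 ⁻¹' s3) := by
  have hprod := h.measure_inter_preimage_eq_mul Finset.univ (sets := ![s1, s2, s3])
    (fun i _ ↦ by fin_cases i <;> assumption)
  have hinter : ⋂ i ∈ Finset.univ, ![X1, X2, X3] i ⁻¹' ![s1, s2, s3] i =
      X1 ⁻¹' s1 ∩ X2 ⁻¹' s2 ∩ X3 ⁻¹' s3 := by
    ext ω
    simp [Fin.forall_fin_succ, and_assoc]
  rwa [hinter, Fin.prod_univ_three] at hprod

theorem integral_natCast_cond_eq_sum_div_sum {Ω : Type*} [MeasurableSpace Ω] {μ : Measure Ω}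
    [IsFiniteMeasure μ] {X : Ω → ℕ} (hX : Measurable X) {E : Set Ω} (hE : MeasurableSet E)
    {s : Finset ℕ} (hEs : ∀ ω ∈ E, X ω ∈ s) :
    ∫ ω, (X ω : ℝ) ∂μ[|E] =
      (∑ k ∈ s, k * μ.real (E ∩ X ⁻¹' {k})) / ∑ k ∈ s, μ.real (E ∩ X ⁻¹' {k}) := by
  have hunion : E = ⋃ k ∈ s, E ∩ X ⁻¹' {k} := by
    ext ω
    simpa using fun hω ↦ hEs ω hω
  have hmeas : ∀ k ∈ s, MeasurableSet (E ∩ X ⁻¹' {k}) :=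
    fun k _ ↦ hE.inter (hX (measurableSet_singleton k))
  have hdisj : (s : Set ℕ).PairwiseDisjoint fun k ↦ E ∩ X ⁻¹' {k} :=
    fun i _ j _ hij ↦ ((Set.disjoint_singleton.2 hij).preimage X).mono
      Set.inter_subset_right Set.inter_subset_right
  have hconst : ∀ k ∈ s, Set.EqOn (fun ω ↦ (X ω : ℝ)) (fun _ ↦ (k : ℝ)) (E ∩ X ⁻¹' {k}) :=
    fun k _ ω hω ↦ congrArg Nat.cast hω.2
  have hintegral : ∫ ω in E, (X ω : ℝ) ∂μ = ∑ k ∈ s, k * μ.real (E ∩ X ⁻¹' {k}) := by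
    conv_lhs => rw [hunion]
    rw [integral_biUnion_finset s hmeas hdisj
      fun k hk ↦ (integrableOn_const (C := (k : ℝ))).congr_fun (hconst k hk).symm (hmeas k hk)]
    refine Finset.sum_congr rfl fun k hk ↦ ?_
    rw [setIntegral_congr_fun (hmeas k hk) (hconst k hk), setIntegral_const, smul_eq_mul,
      mul_comm]
  have hmass : μ.real E = ∑ k ∈ s, μ.real (E ∩ X ⁻¹' {k}) := by
    conv_lhs => rw [hunion]
    exact measureReal_biUnion_finset hdisj hmeas
  rw [ProbabilityTheory.cond, integral_smul_measure, hintegral, ENNReal.toReal_inv,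
    ← measureReal_def, ← hmass, smul_eq_mul, inv_mul_eq_div]

theorem bimol_event_inter_preimage {Ω : Type*} (X1 X2 X3 : Ω → ℕ) {b₁ b₂ k : ℕ}
    (hk₁ : k ≤ b₁) (hk₂ : k ≤ b₂) :
    {ω | X1 ω + X3 ω = b₁ ∧ X2 ω + X3 ω = b₂} ∩ X3 ⁻¹' {k} =
      X1 ⁻¹' {b₁ - k} ∩ X2 ⁻¹' {b₂ - k} ∩ X3 ⁻¹' {k} := by
  ext ω
  simp only [Set.mem_inter_iff, Set.mem_ofPred_eq, Set.mem_preimage, Set.mem_singleton_iff]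
  omega

theorem measureReal_poisson_bimol_atom {Ω : Type*} [MeasurableSpace Ω] {μ : Measure Ω}
    {X1 X2 X3 : Ω → ℕ} {lam1 lam2 lam3 : ℝ} (h1 : 0 ≤ lam1) (h2 : 0 ≤ lam2) (h3 : 0 ≤ lam3)
    (hindep : iIndepFun ![X1, X2, X3] μ)
    (hX1 : ∀ k : ℕ, μ (X1 ⁻¹' {k}) =
      ENNReal.ofReal (Real.exp (-lam1) * lam1 ^ k / Nat.factorial k))
    (hX2 : ∀ k : ℕ, μ (X2 ⁻¹' {k}) =
      ENNReal.ofReal (Real.exp (-lam2) * lam2 ^ k / Nat.factorial k))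
    (hX3 : ∀ k : ℕ, μ (X3 ⁻¹' {k}) =
      ENNReal.ofReal (Real.exp (-lam3) * lam3 ^ k / Nat.factorial k))
    (b₁ b₂ k : ℕ) :
    μ.real (X1 ⁻¹' {b₁ - k} ∩ X2 ⁻¹' {b₂ - k} ∩ X3 ⁻¹' {k}) =
      (Real.exp (-lam1) * Real.exp (-lam2) * Real.exp (-lam3)) *
        F0bimolTerm lam1 lam2 lam3 b₁ b₂ k := by
  rw [measureReal_def, hindep.measure_inter_preimage_three (measurableSet_singleton _)
      (measurableSet_singleton _) (measurableSet_singleton _), hX1, hX2, hX3,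
    ← ENNReal.ofReal_mul (by positivity), ← ENNReal.ofReal_mul (by positivity),
    ENNReal.toReal_ofReal (by positivity), F0bimolTerm]
  field_simp

theorem conditional_mean_bimolecular_general
    {Ω : Type*} [MeasurableSpace Ω] (μ : Measure Ω) [IsProbabilityMeasure μ]
    (X1 X2 X3 : Ω → ℕ) (hm1 : Measurable X1) (hm2 : Measurable X2) (hm3 : Measurable X3)
    (lam1 lam2 lam3 : ℝ) (h1 : 0 < lam1) (h2 : 0 < lam2) (h3 : 0 < lam3)
    (hindep : iIndepFun ![X1, X2, X3] μ)
    (hX1 : ∀ k : ℕ, μ (X1 ⁻¹' {k}) =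
      ENNReal.ofReal (Real.exp (-lam1) * lam1 ^ k / Nat.factorial k))
    (hX2 : ∀ k : ℕ, μ (X2 ⁻¹' {k}) =
      ENNReal.ofReal (Real.exp (-lam2) * lam2 ^ k / Nat.factorial k))
    (hX3 : ∀ k : ℕ, μ (X3 ⁻¹' {k}) =
      ENNReal.ofReal (Real.exp (-lam3) * lam3 ^ k / Nat.factorial k))
    (b₁ b₂ : ℕ) (hb₁ : 1 ≤ b₁) (hb₂ : 1 ≤ b₂) :
    ∫ ω, ((X3 ω : ℝ)) ∂(μ[|{ω | X1 ω + X3 ω = b₁ ∧ X2 ω + X3 ω = b₂}]) =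
      lam3 * F0bimol lam1 lam2 lam3 (b₁ - 1) (b₂ - 1) / F0bimol lam1 lam2 lam3 b₁ b₂ := by
  obtain ⟨c₁, rfl⟩ := Nat.exists_eq_add_of_le' hb₁
  obtain ⟨c₂, rfl⟩ := Nat.exists_eq_add_of_le' hb₂
  set E := {ω | X1 ω + X3 ω = c₁ + 1 ∧ X2 ω + X3 ω = c₂ + 1}
  set C := Real.exp (-lam1) * Real.exp (-lam2) * Real.exp (-lam3)
  have hE : MeasurableSet E :=
    ((hm1.add hm3) (measurableSet_singleton _)).inter ((hm2.add hm3) (measurableSet_singleton _))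
  have hX3E : ∀ ω ∈ E, X3 ω ∈ Finset.range (min (c₁ + 1) (c₂ + 1) + 1) := fun ω hω ↦ by
    simp only [E, Set.mem_ofPred_eq] at hω
    simp only [Finset.mem_range]
    omega
  have hatom : ∀ k ∈ Finset.range (min (c₁ + 1) (c₂ + 1) + 1),
      μ.real (E ∩ X3 ⁻¹' {k}) = C * F0bimolTerm lam1 lam2 lam3 (c₁ + 1) (c₂ + 1) k := by
    intro k hk
    have hk' := Finset.mem_range.1 hk
    rw [bimol_event_inter_preimage X1 X2 X3 (by omega) (by omega)]
    exact measureReal_poisson_bimol_atom h1.le h2.le h3.le hindep hX1 hX2 hX3 _ _ k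
  rw [integral_natCast_cond_eq_sum_div_sum hm3 hE hX3E, Finset.sum_congr rfl hatom,
    Finset.sum_congr rfl fun k hk ↦ congrArg _ (hatom k hk)]
  simp only [mul_left_comm _ C, ← Finset.mul_sum, sum_mul_F0bimolTerm_succ, ← F0bimol_eq_sum,
    Nat.add_sub_cancel]
  exact mul_div_mul_left _ _ (by positivity)

/-- For independent Poisson `X₁,X₂,X₃` with `Y₁ = X₁+X₃`, `Y₂ = X₂+X₃` and
`b₁,b₂ ≥ 1` with `P(Y=b) > 0`,
`E[X₃ | Y₁=b₁, Y₂=b₂] = λ₃ F₀(b₁-1,b₂-1)/F₀(b₁,b₂)`. -/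
theorem conditional_mean_bimolecular
    {Ω : Type*} [MeasurableSpace Ω] (μ : Measure Ω) [IsProbabilityMeasure μ]
    (X1 X2 X3 : Ω → ℕ) (hm1 : Measurable X1) (hm2 : Measurable X2) (hm3 : Measurable X3)
    (lam1 lam2 lam3 : ℝ) (h1 : 0 < lam1) (h2 : 0 < lam2) (h3 : 0 < lam3)
    (hindep : iIndepFun ![X1, X2, X3] μ)
    (hX1 : ∀ k : ℕ, μ (X1 ⁻¹' {k}) =
      ENNReal.ofReal (Real.exp (-lam1) * lam1 ^ k / Nat.factorial k))
    (hX2 : ∀ k : ℕ, μ (X2 ⁻¹' {k}) =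
      ENNReal.ofReal (Real.exp (-lam2) * lam2 ^ k / Nat.factorial k))
    (hX3 : ∀ k : ℕ, μ (X3 ⁻¹' {k}) =
      ENNReal.ofReal (Real.exp (-lam3) * lam3 ^ k / Nat.factorial k))
    (b₁ b₂ : ℕ) (hb₁ : 1 ≤ b₁) (hb₂ : 1 ≤ b₂)
    (hpos : 0 < μ {ω | X1 ω + X3 ω = b₁ ∧ X2 ω + X3 ω = b₂}) :
    ∫ ω, ((X3 ω : ℝ)) ∂(μ[|{ω | X1 ω + X3 ω = b₁ ∧ X2 ω + X3 ω = b₂}]) =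
      lam3 * F0bimol lam1 lam2 lam3 (b₁ - 1) (b₂ - 1) / F0bimol lam1 lam2 lam3 b₁ b₂ :=
  conditional_mean_bimolecular_general μ X1 X2 X3 hm1 hm2 hm3 lam1 lam2 lam3 h1 h2 h3 hindep hX1 hX2
    hX3 b₁ b₂ hb₁ hb₂
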